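/- Let p be a prime, F a field of characteristic p, A a commutative F-algebra, e ∈ A an idempotent, x ∈ A, and i ∈ 𝔽_p× with (x - i)^{p^{l-1}} e ≠ 0. Then for every s ≥ 0, x^{p^s} e ≠ x^{p^s + p^{l-1}(p-1)} e; in particular x^{p^s} ≠ x^{p^s + p^{l-1}(p-1)}. -/

import Mathlib

/-!
Work modulo the annihilator of `e`, a nontrivial ring of characteristic `p` in which `c := i`
satisfies `c ^ p = c` and `n := x - c` is nilpotent, so `x = c + n` is a unit. An equality
`x ^ p ^ s = x ^ (p ^ s + p ^ (l - 1) * (p - 1))` would give `x ^ (p ^ (l - 1) * (p - 1)) = 1`,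
so `y := x ^ p ^ (l - 1)` satisfies `y ^ p = y`; by Frobenius, so does `y - c = n ^ p ^ (l - 1)`.
A nilpotent fixed point of `z ↦ z ^ p` is zero, contradicting `n ^ p ^ (l - 1) ≠ 0`.
-/

theorem pow_pow_eq_self_of_pow_eq_self {M : Type*} [Monoid M] {z : M} {p : ℕ} (h : z ^ p = z)
    (k : ℕ) : z ^ p ^ k = z := by
  induction k with
  | zero => simp
  | succ k ih => rw [pow_succ, pow_mul, ih, h]

theorem IsNilpotent.eq_zero_of_pow_eq_self {M : Type*} [MonoidWithZero M] {z : M} {p : ℕ}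
    (hz : IsNilpotent z) (hp : 1 < p) (h : z ^ p = z) : z = 0 := by
  obtain ⟨k, hk⟩ := hz
  rw [← pow_pow_eq_self_of_pow_eq_self h k]
  exact pow_eq_zero_of_le (Nat.lt_pow_self hp).le hk

theorem pow_ne_pow_add_of_isNilpotent_sub {R : Type*} [CommRing R] {p : ℕ} [hp : Fact p.Prime]
    [CharP R p] {x c : R} (hc : IsUnit c) (hcp : c ^ p = c) (hnil : IsNilpotent (x - c)) {k : ℕ}
    (hne : (x - c) ^ p ^ k ≠ 0) (s : ℕ) : x ^ p ^ s ≠ x ^ (p ^ s + p ^ k * (p - 1)) := by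
  intro h
  have hx : IsUnit x := by simpa using hnil.isUnit_add_left_of_commute hc (Commute.all _ _)
  have hone : x ^ (p ^ k * (p - 1)) = 1 := by
    rwa [pow_add, eq_comm, (hx.pow _).mul_eq_left] at h
  have hy : (x ^ p ^ k) ^ p = x ^ p ^ k := by
    have hexp : p ^ k * p = p ^ k * (p - 1) + p ^ k := by
      rw [← Nat.mul_add_one, Nat.sub_add_cancel hp.out.one_le]
    rw [← pow_mul, hexp, pow_add, hone, one_mul]
  refine hne ((hnil.pow_of_pos (pow_ne_zero k hp.out.ne_zero)).eq_zero_of_pow_eq_self hp.out.one_lt ?_)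
  rw [sub_pow_char_pow, pow_pow_eq_self_of_pow_eq_self hcp, sub_pow_char, hy, hcp]

theorem stmt13_general (p : ℕ) [Fact p.Prime] (F : Type*) [Field F] [CharP F p]
    (A : Type*) [CommRing A] [Algebra F A]
    (e : A) (x : A)
    (i : ZMod p) (hi : i ≠ 0) (l : ℕ)
    (hnil : ∃ l' : ℕ,
      (x - algebraMap F A (ZMod.castHom (dvd_refl p) F i)) ^ (p ^ l') * e = 0)
    (hne : (x - algebraMap F A (ZMod.castHom (dvd_refl p) F i)) ^ (p ^ (l - 1)) * e ≠ 0) :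
    ∀ s : ℕ, x ^ (p ^ s) * e ≠ x ^ (p ^ s + p ^ (l - 1) * (p - 1)) * e ∧
      x ^ (p ^ s) ≠ x ^ (p ^ s + p ^ (l - 1) * (p - 1)) := by
  set c := algebraMap F A (ZMod.castHom (dvd_refl p) F i)
  set I : Ideal A := (Submodule.span A {e}).annihilator
  let π := Ideal.Quotient.mk I
  have hπ : ∀ a, π a = 0 ↔ a * e = 0 := fun a => by
    rw [Ideal.Quotient.eq_zero_iff_mem, Submodule.mem_annihilator_span_singleton, smul_eq_mul]
  obtain ⟨l', hl'⟩ := hnil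
  have hnil : IsNilpotent (π x - π c) := ⟨p ^ l', by rwa [← map_sub, ← map_pow, hπ]⟩
  have hne : (π x - π c) ^ p ^ (l - 1) ≠ 0 := by rwa [← map_sub, ← map_pow, Ne, hπ]
  have : Nontrivial (A ⧸ I) := nontrivial_of_ne _ _ hne
  have : CharP (A ⧸ I) p := charP_of_injective_algebraMap' F p
  have hc : IsUnit (π c) :=
    ((isUnit_iff_ne_zero.mpr ((map_ne_zero _).mpr hi)).map (algebraMap F A)).map π
  have hcp : π c ^ p = π c := by
    simp only [c, ← map_pow, ZMod.pow_card]
  intro s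
  have hmod : x ^ p ^ s * e ≠ x ^ (p ^ s + p ^ (l - 1) * (p - 1)) * e := fun h =>
    pow_ne_pow_add_of_isNilpotent_sub hc hcp hnil hne s <| by
      rw [← map_pow, ← map_pow, ← sub_eq_zero, ← map_sub, hπ, sub_mul, h, sub_self]
  exact ⟨hmod, fun h => hmod (congrArg (· * e) h)⟩

theorem stmt13 (p : ℕ) [Fact p.Prime] (F : Type*) [Field F] [CharP F p]
    (A : Type*) [CommRing A] [Algebra F A]
    (e : A) (hidem : e * e = e) (x : A)
    (i : ZMod p) (hi : i ≠ 0) (l : ℕ) (hl : 1 ≤ l)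
    (hnil : ∃ l' : ℕ,
      (x - algebraMap F A (ZMod.castHom (dvd_refl p) F i)) ^ (p ^ l') * e = 0)
    (hne : (x - algebraMap F A (ZMod.castHom (dvd_refl p) F i)) ^ (p ^ (l - 1)) * e ≠ 0) :
    ∀ s : ℕ, x ^ (p ^ s) * e ≠ x ^ (p ^ s + p ^ (l - 1) * (p - 1)) * e ∧
      x ^ (p ^ s) ≠ x ^ (p ^ s + p ^ (l - 1) * (p - 1)) :=
  stmt13_general p F A e x i hi l hnil hne
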